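/- Let λ ≠ 0, let x, x̃ : ℤ/Nℤ → ℝ with x̃_k ≠ x_k and x_k ≠ x̃_{k−1} for all k, and define p : ℤ/Nℤ → ℝ by p_k = λ/(x̃_k−x_k) + λ/(x_k−x̃_{k−1}). Then the monodromy matrix T = L_{N−1}·L_{N−2}·⋯·L_1·L_0 satisfies T · (x̃_{−1}, 1)ᵀ = (∏_{k∈ℤ/Nℤ} (x̃_{k−1}−x_k)/(x̃_k−x_k)) · (x̃_{−1}, 1)ᵀ; in particular, ∏_{k∈ℤ/Nℤ}(x̃_{k−1}−x_k)/(x̃_k−x_k) is an eigenvalue of T. -/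

import Mathlib

/-!
Each transition matrix `L_k` carries `(x̃_{k-1}, 1)` to `(x̃_{k-1} - x_k)/(x̃_k - x_k) • (x̃_k, 1)`:
with `p_k / λ = (x̃_k - x̃_{k-1}) / ((x̃_k - x_k)(x_k - x̃_{k-1}))` this is a two-line computation.
Multiplying these relations along the chain `L_0, L_1, …, L_{N-1}` telescopes, and periodicity
`x̃_{N-1} = x̃_{-1}` closes the loop, so `(x̃_{-1}, 1)` is an eigenvector of `T`.
-/

/-- Transition matrix of the zero curvature representation of the Bäcklund
transformation for the symmetric rational additive Toda-type system. -/
noncomputable def ratAddTodaL (N : ℕ) (lam : ℝ) (x p : ZMod N → ℝ) (i : ℕ) :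
    Matrix (Fin 2) (Fin 2) ℝ :=
  1 + lam⁻¹ • !![p (i : ZMod N) * x (i : ZMod N), -(p (i : ZMod N) * x (i : ZMod N) ^ 2);
                 p (i : ZMod N), -(p (i : ZMod N) * x (i : ZMod N))]

/-- Monodromy matrix `T = L_{N-1} ⬝ ⋯ ⬝ L_1 ⬝ L_0`. -/
noncomputable def ratAddTodaT (N : ℕ) (lam : ℝ) (x p : ZMod N → ℝ) :
    Matrix (Fin 2) (Fin 2) ℝ :=
  ((List.range N).reverse.map (ratAddTodaL N lam x p)).prod

open Finset Matrix

lemma ZMod.prod_range_natCast {M : Type*} [CommMonoid M] (N : ℕ) [NeZero N]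
    (f : ZMod N → M) : ∏ i ∈ range N, f i = ∏ k : ZMod N, f k :=
  prod_bij' (fun i _ => (i : ZMod N)) (fun k _ => k.val)
    (fun _ _ => mem_univ _) (fun k _ => mem_range.mpr (ZMod.val_lt k))
    (fun _ hi => ZMod.val_natCast_of_lt (mem_range.mp hi)) (fun k _ => ZMod.natCast_zmod_val k)
    (fun _ _ => rfl)

lemma Matrix.list_prod_range_mulVec_of_mulVec_eq_smul {m R : Type*} [Fintype m] [DecidableEq m]
    [CommSemiring R] (M : ℕ → Matrix m m R) (v : ℕ → m → R) (c : ℕ → R)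
    (h : ∀ i, M i *ᵥ v i = c i • v (i + 1)) (n : ℕ) :
    ((List.range n).reverse.map M).prod *ᵥ v 0 = (∏ i ∈ range n, c i) • v n := by
  induction n with
  | zero => simp
  | succ n ih =>
    rw [List.range_succ, List.reverse_append, List.reverse_singleton, List.singleton_append,
      List.map_cons, List.prod_cons, ← mulVec_mulVec, ih, mulVec_smul, h, smul_smul,
      prod_range_succ, mul_comm]

lemma Matrix.hasEigenvalue_toLin'_of_mulVec_eq_smul {n R : Type*} [Fintype n] [DecidableEq n]
    [CommRing R] {A : Matrix n n R} {μ : R} {v : n → R} (hv : v ≠ 0) (h : A *ᵥ v = μ • v) :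
    Module.End.HasEigenvalue (toLin' A) μ :=
  Module.End.hasEigenvalue_of_hasEigenvector
    ⟨by rwa [Module.End.mem_eigenspace_iff, toLin'_apply], hv⟩

lemma backlund_matrix_mulVec_eq_smul {lam x u v p : ℝ} (hlam : lam ≠ 0) (hv : v ≠ x) (hu : x ≠ u)
    (hp : p = lam / (v - x) + lam / (x - u)) :
    (1 + lam⁻¹ • !![p * x, -(p * x ^ 2); p, -(p * x)]) *ᵥ ![u, 1] =
      ((u - x) / (v - x)) • ![v, 1] := by
  have hvx : v - x ≠ 0 := sub_ne_zero.mpr hv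
  have hxu : x - u ≠ 0 := sub_ne_zero.mpr hu
  have hq : lam⁻¹ * p = (v - u) / ((v - x) * (x - u)) := by
    rw [hp]; field_simp; ring
  rw [add_mulVec, one_mulVec, smul_mulVec, cons_mulVec, cons_mulVec, empty_mulVec, smul_vec2]
  simp only [vec2_dotProduct', smul_cons, Matrix.smul_empty, cons_add_cons, empty_add_empty, smul_eq_mul]
  refine vec2_eq ?_ ?_
  · calc u + lam⁻¹ * (p * x * u + -(p * x ^ 2) * 1) = u - lam⁻¹ * p * x * (x - u) := by ring
      _ = (u - x) / (v - x) * v := by rw [hq]; field_simp; ring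
  · calc 1 + lam⁻¹ * (p * u + -(p * x) * 1) = 1 - lam⁻¹ * p * (x - u) := by ring
      _ = (u - x) / (v - x) * 1 := by rw [hq]; field_simp; ring

/-- For the periodic symmetric rational additive Toda-type
system, `∏ (x̃_{k−1} − x_k)/(x̃_k − x_k)` is an eigenvalue of the monodromy
matrix, with eigenvector `(x̃_{−1}, 1)ᵀ`. -/
theorem ratAddToda_monodromy_eigenvalue
    (N : ℕ) [NeZero N] (lam : ℝ) (hlam : lam ≠ 0) (x xt p : ZMod N → ℝ)
    (hx1 : ∀ k : ZMod N, xt k ≠ x k) (hx2 : ∀ k : ZMod N, x k ≠ xt (k - 1))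
    (hp : ∀ k : ZMod N, p k = lam / (xt k - x k) + lam / (x k - xt (k - 1))) :
    (ratAddTodaT N lam x p).mulVec ![xt (-1), 1] =
      (∏ k : ZMod N, (xt (k - 1) - x k) / (xt k - x k)) • ![xt (-1), 1] ∧
    Module.End.HasEigenvalue (Matrix.toLin' (ratAddTodaT N lam x p))
      (∏ k : ZMod N, (xt (k - 1) - x k) / (xt k - x k)) := by
  have hstep (i : ℕ) : ratAddTodaL N lam x p i *ᵥ ![xt ((i : ZMod N) - 1), 1] =
      ((xt ((i : ZMod N) - 1) - x i) / (xt i - x i)) • ![xt (((i + 1 : ℕ) : ZMod N) - 1), 1] := by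
    rw [Nat.cast_succ, add_sub_cancel_right]
    exact backlund_matrix_mulVec_eq_smul hlam (hx1 _) (hx2 _) (hp _)
  have hT := list_prod_range_mulVec_of_mulVec_eq_smul _ _ _ hstep N
  rw [ZMod.prod_range_natCast N (fun k => (xt (k - 1) - x k) / (xt k - x k)),
    Nat.cast_zero, zero_sub, ZMod.natCast_self, zero_sub] at hT
  refine ⟨hT, hasEigenvalue_toLin'_of_mulVec_eq_smul (fun h => ?_) hT⟩
  simpa using congrFun h 1
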